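/- Let E and ν be real numbers with ν ≠ -1 and ν ≠ 1, let μ = E/(2(1+ν)), let δγ ≥ 0 be such that 1 − ν + (1/3)E·δγ ≠ 0 and 1 + 2μ·δγ ≠ 0, set a₁ = (1−ν)/(1−ν + (1/3)E·δγ) and a₂ = 1/(1 + 2μ·δγ), and let A be the 3×3 matrix with rows ((a₁+a₂)/2, (a₁−a₂)/2, 0), ((a₁−a₂)/2, (a₁+a₂)/2, 0), (0, 0, a₂), and P = (1/3)·N with N having rows (2, -1, 0), (-1, 2, 0), (0, 0, 6). Then for every σ = (σ_xx, σ_yy, σ_xy) ∈ ℝ³, (Aσ)ᵀ P (Aσ) = (σ_xx + σ_yy)²/(6·(1 + E·δγ/(3(1−ν)))²) + ((σ_yy − σ_xx)² + 4σ_xy²)/(2·(1 + 2μ·δγ)²). -/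
import Mathlib


open Matrix

set_option maxHeartbeats 2000000

theorem corrected_stress_vonMises_form
    (E ν mu δγ a₁ a₂ : ℝ)
    (hνm1 : ν ≠ -1) (hν1 : ν ≠ 1)
    (hmu : mu = E / (2 * (1 + ν)))
    (hδγ : 0 ≤ δγ)
    (h1 : 1 - ν + (1/3) * E * δγ ≠ 0)
    (h2 : 1 + 2 * mu * δγ ≠ 0)
    (ha₁ : a₁ = (1 - ν) / (1 - ν + (1/3) * E * δγ))
    (ha₂ : a₂ = 1 / (1 + 2 * mu * δγ))
    (A P : Matrix (Fin 3) (Fin 3) ℝ)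
    (hA : A = !![(a₁ + a₂)/2, (a₁ - a₂)/2, 0;
                 (a₁ - a₂)/2, (a₁ + a₂)/2, 0;
                 0, 0, a₂])
    (hP : P = (1/3 : ℝ) • !![2, -1, 0; -1, 2, 0; 0, 0, 6]) :
    ∀ σ : Fin 3 → ℝ,
      (A *ᵥ σ) ⬝ᵥ (P *ᵥ (A *ᵥ σ)) =
        (σ 0 + σ 1)^2 / (6 * (1 + E * δγ / (3 * (1 - ν)))^2) +
        ((σ 1 - σ 0)^2 + 4 * (σ 2)^2) / (2 * (1 + 2 * mu * δγ)^2) := by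
  intro σ
  have hν : (1 : ℝ) - ν ≠ 0 := sub_ne_zero.mpr (fun h => hν1 h.symm)
  have hde : 1 + E * δγ / (3 * (1 - ν)) = (1 - ν + (1/3) * E * δγ) / (1 - ν) := by
    field_simp
  have hd : 1 + E * δγ / (3 * (1 - ν)) ≠ 0 := by
    rw [hde]; exact div_ne_zero h1 hν
  have e1 : a₁ = 1 / (1 + E * δγ / (3 * (1 - ν))) := by
    rw [ha₁, hde, one_div_div]
  have key : (A *ᵥ σ) ⬝ᵥ (P *ᵥ (A *ᵥ σ)) =
      (σ 0 + σ 1)^2 * a₁^2 / 6 + ((σ 1 - σ 0)^2 + 4 * (σ 2)^2) * a₂^2 / 2 := by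
    subst hA hP
    simp [mulVec, dotProduct, Fin.sum_univ_three]
    ring
  rw [key, e1, ha₂]
  field_simp
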